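/- arXiv:1905.11165 — 4 statements merged into one kernel-verified Lean document; each statement's English description precedes it below -/
import Mathlib

section
/- Let q ≥ 2 and let θ be real with √q < θ ≤ q, write θ = q^{1−1/p} with 2 < p ≤ ∞, and let λ = (θ + qθ⁻¹)/(q+1) > 0. Define λ^(k) by the explicit formula λ^(k) = (1/((q+1)q^{k−1}))·(θ^k + (qθ⁻¹)^k + (1 − q⁻¹)·∑_{i=1}^{k−1} q^i θ^{k−2i}). Then q^{−k/p} ≤ λ^(k) ≤ (k+1)·q^{−k/p}. -/
/-!
Substituting `θ = q^{1-e}` turns `q^{-ke}` into `(θ/q)^k`, which times the denominator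
`(q+1)q^{k-1}` is `θ^k + θ^k/q`. The sum terms `g i = q^i θ^{k-2i}` decrease geometrically with
ratio `q/θ² ∈ [1/q, 1]`. Because the ratio is at least `1/q`, the weighted sum `(1 - q⁻¹) ∑ g i`
dominates the telescoping sum `g 1 - g k = g 1 - (q/θ)^k`, and `g 1 ≥ θ^k/q`: this gives the lower
bound. Because the ratio is at most `1`, every term, and `(q/θ)^k` as well, is at most `θ^k`:
this gives the upper bound.
-/

open Finset

namespace SphereEigenvalue

lemma sub_le_mul_sum_Icc {g : ℕ → ℝ} {c : ℝ} (h : ∀ i, g i - g (i + 1) ≤ c * g i) (n : ℕ) :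
    g 1 - g (n + 1) ≤ c * ∑ i ∈ Icc 1 n, g i := by
  induction n with
  | zero => simp
  | succ n ih =>
    rw [sum_Icc_succ_top (by omega), mul_add]
    linarith [h (n + 1)]

noncomputable def term (q θ : ℝ) (k i : ℕ) : ℝ := q ^ i * θ ^ ((k : ℤ) - 2 * (i : ℤ))

noncomputable def numerator (q θ : ℝ) (k : ℕ) : ℝ :=
  θ ^ k + (q * θ⁻¹) ^ k + (1 - q⁻¹) * ∑ i ∈ Icc 1 (k - 1), term q θ k i

noncomputable def eigenvalue (q θ : ℝ) (k : ℕ) : ℝ := ((q + 1) * q ^ (k - 1))⁻¹ * numerator q θ k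

variable {q θ : ℝ}

lemma term_succ (hθ : θ ≠ 0) (k i : ℕ) : term q θ k (i + 1) = q / θ ^ 2 * term q θ k i := by
  have h : (k : ℤ) - 2 * ((i + 1 : ℕ) : ℤ) = (k - 2 * i : ℤ) - 2 := by push_cast; ring
  rw [term, term, h, zpow_sub₀ hθ]
  simp only [pow_succ, zpow_ofNat]
  field_simp

lemma term_nonneg (hθ : 0 < θ) (hq : 0 ≤ q) (k i : ℕ) : 0 ≤ term q θ k i := by
  unfold term; positivity

lemma term_one (hθ : θ ≠ 0) (k : ℕ) : term q θ k 1 = q / θ ^ 2 * θ ^ k := by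
  rw [← zero_add 1, term_succ hθ, term]
  simp

lemma term_self (k : ℕ) : term q θ k k = (q * θ⁻¹) ^ k := by
  rw [term, show (k : ℤ) - 2 * k = -k by ring, zpow_neg, zpow_natCast, mul_pow, inv_pow]

lemma term_le (hθ : 0 < θ) (hqθ : q ≤ θ ^ 2) (hθq : θ ≤ q) (k i : ℕ) : term q θ k i ≤ θ ^ k := by
  have hq : 0 ≤ q := hθ.le.trans hθq
  induction i with
  | zero => simp [term]
  | succ i ih =>
    have hratio : q / θ ^ 2 ≤ 1 := div_le_one_of_le₀ hqθ (by positivity)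
    rw [term_succ hθ.ne']
    exact (mul_le_of_le_one_left (term_nonneg hθ hq k i) hratio).trans ih

lemma term_sub_term_succ_le (hθ : 0 < θ) (hθq : θ ≤ q) (k i : ℕ) :
    term q θ k i - term q θ k (i + 1) ≤ (1 - q⁻¹) * term q θ k i := by
  have hq : 0 < q := hθ.trans_le hθq
  have hratio : q⁻¹ ≤ q / θ ^ 2 := by
    rw [inv_eq_one_div, div_le_div_iff₀ hq (by positivity)]
    nlinarith
  rw [term_succ hθ.ne']
  nlinarith [term_nonneg hθ hq.le k i]

lemma pow_add_pow_div_le_numerator (hθ : 0 < θ) (hθq : θ ≤ q) (n : ℕ) :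
    θ ^ (n + 1) + θ ^ (n + 1) / q ≤ numerator q θ (n + 1) := by
  have hq : 0 < q := hθ.trans_le hθq
  have htele := sub_le_mul_sum_Icc (term_sub_term_succ_le hθ hθq (n + 1)) n
  have hfirst : θ ^ (n + 1) / q ≤ term q θ (n + 1) 1 := by
    rw [term_one hθ.ne', div_eq_inv_mul]
    refine mul_le_mul_of_nonneg_right ?_ (by positivity)
    rw [inv_eq_one_div, div_le_div_iff₀ hq (by positivity)]
    nlinarith
  rw [term_self] at htele
  rw [numerator, Nat.add_sub_cancel]
  linarith

lemma numerator_le (hθ : 0 < θ) (hqθ : q ≤ θ ^ 2) (hθq : θ ≤ q) (n : ℕ) :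
    numerator q θ (n + 1) ≤ (n + 2) * θ ^ (n + 1) := by
  have hq : 0 < q := hθ.trans_le hθq
  have hsum : ∑ i ∈ Icc 1 n, term q θ (n + 1) i ≤ n * θ ^ (n + 1) := by
    refine (sum_le_sum (s := Icc 1 n) fun i _ => term_le hθ hqθ hθq (n + 1) i).trans_eq ?_
    simp
  have hweight : 1 - q⁻¹ ≤ 1 := by linarith [inv_pos.2 hq]
  have hweight' : 0 ≤ 1 - q⁻¹ := by
    rw [sub_nonneg]; exact inv_le_one_of_one_le₀ (by nlinarith)
  have hlast := term_le hθ hqθ hθq (n + 1) (n + 1)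
  rw [term_self] at hlast
  rw [numerator, Nat.add_sub_cancel]
  have hsum_nonneg : 0 ≤ ∑ i ∈ Icc 1 n, term q θ (n + 1) i :=
    sum_nonneg fun i _ => term_nonneg hθ hq.le _ i
  nlinarith

lemma div_pow_mul_denominator (hq : q ≠ 0) (n : ℕ) :
    (θ / q) ^ (n + 1) * ((q + 1) * q ^ n) = θ ^ (n + 1) + θ ^ (n + 1) / q := by
  rw [div_pow, pow_succ q n]
  field_simp

theorem eigenvalue_bounds (hθ : 0 < θ) (hqθ : q ≤ θ ^ 2) (hθq : θ ≤ q) {k : ℕ} (hk : 1 ≤ k) :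
    (θ / q) ^ k ≤ eigenvalue q θ k ∧ eigenvalue q θ k ≤ (k + 1) * (θ / q) ^ k := by
  obtain ⟨n, rfl⟩ := Nat.exists_eq_add_of_le' hk
  have hq : 0 < q := hθ.trans_le hθq
  have hden : 0 < (q + 1) * q ^ n := by positivity
  rw [eigenvalue, Nat.add_sub_cancel, inv_mul_eq_div, le_div_iff₀ hden, div_le_iff₀ hden,
    mul_assoc, div_pow_mul_denominator hq.ne']
  refine ⟨pow_add_pow_div_le_numerator hθ hθq n, (numerator_le hθ hqθ hθq n).trans ?_⟩
  have : 0 ≤ θ ^ (n + 1) / q := by positivity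
  push_cast
  nlinarith

end SphereEigenvalue

lemma Real.rpow_neg_mul_eq_div_pow {q e θ : ℝ} (hq : 0 < q) (hθe : θ = q ^ (1 - e)) (k : ℕ) :
    q ^ (-(k : ℝ) * e) = (θ / q) ^ k := by
  rw [hθe, ← Real.rpow_sub_one hq.ne', ← Real.rpow_mul_natCast hq.le]
  ring_nf

theorem stmt2_general (q : ℕ) (θ : ℝ) (hθ1 : Real.sqrt q < θ) (hθ2 : θ ≤ q)
    (e : ℝ) (hθe : θ = (q : ℝ) ^ ((1 : ℝ) - e))
    (k : ℕ) (hk : 1 ≤ k) (lamk : ℝ)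
    (hlamk : lamk = (((q : ℝ) + 1) * (q : ℝ) ^ (k - 1))⁻¹ *
      (θ ^ k + ((q : ℝ) * θ⁻¹) ^ k +
        (1 - (q : ℝ)⁻¹) * ∑ i ∈ Finset.Icc 1 (k - 1),
          (q : ℝ) ^ i * θ ^ ((k : ℤ) - 2 * (i : ℤ)))) :
    (q : ℝ) ^ (-(k : ℝ) * e) ≤ lamk ∧ lamk ≤ ((k : ℝ) + 1) * (q : ℝ) ^ (-(k : ℝ) * e) := by
  have hθ : 0 < θ := (Real.sqrt_nonneg _).trans_lt hθ1
  have hqθ : (q : ℝ) ≤ θ ^ 2 := ((Real.sqrt_lt' hθ).1 hθ1).le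
  rw [Real.rpow_neg_mul_eq_div_pow (hθ.trans_le hθ2) hθe, hlamk]
  exact SphereEigenvalue.eigenvalue_bounds hθ hqθ hθ2 hk

/-- For real `θ` with `√q < θ ≤ q`, writing `θ = q^{1-1/p}` with
`2 < p ≤ ∞` (equivalently `θ = q^{1-e}` with `e = 1/p ∈ [0, 1/2)`), the eigenvalue
`λ^(k)` defined by the explicit formula satisfies `q^{-k/p} ≤ λ^(k) ≤ (k+1) q^{-k/p}`. -/
theorem stmt2 (q : ℕ) (hq : 2 ≤ q) (θ : ℝ) (hθ1 : Real.sqrt q < θ) (hθ2 : θ ≤ q)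
    (e : ℝ) (he0 : 0 ≤ e) (he1 : e < 1 / 2) (hθe : θ = (q : ℝ) ^ ((1 : ℝ) - e))
    (k : ℕ) (hk : 1 ≤ k) (lamk : ℝ)
    (hlamk : lamk = (((q : ℝ) + 1) * (q : ℝ) ^ (k - 1))⁻¹ *
      (θ ^ k + ((q : ℝ) * θ⁻¹) ^ k +
        (1 - (q : ℝ)⁻¹) * ∑ i ∈ Finset.Icc 1 (k - 1),
          (q : ℝ) ^ i * θ ^ ((k : ℤ) - 2 * (i : ℤ)))) :
    (q : ℝ) ^ (-(k : ℝ) * e) ≤ lamk ∧ lamk ≤ ((k : ℝ) + 1) * (q : ℝ) ^ (-(k : ℝ) * e) :=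
  stmt2_general q θ hθ1 hθ2 e hθe k hk lamk hlamk
end

section
/- Let X be a finite (q+1)-regular non-bipartite Ramanujan graph on n vertices (every eigenvalue λ ≠ 1 of the normalized adjacency operator satisfies |λ| ≤ 2√q/(q+1)). Then for every ε > 0 and every vertex x₀, the number of vertices y with d(x₀,y) > (1+ε)·log_q(n) is o_ε(n) as n → ∞. -/
/-!
Let `A` be the adjacency matrix and `P_k(X) = √q ^ k S_k(X / √q)`, a polynomial of degree `k`
(`S_k` the Chebyshev polynomial with `S_k(2 cos θ) sin θ = sin((k + 1) θ)`). The entry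
`P_k(A) y x` vanishes when `d(x, y) > k`. Apply `P_k(A)` to `u = δ_x - 1/n`, which is orthogonal
to the constants: at every vertex `y` with `d(x, y) > k` the result is `-P_k(q + 1) / n`, and
`P_k(q + 1) = 1 + q + ⋯ + q^k ≥ q^k`. On the other hand, by the Ramanujan property every other
eigenvalue lies in `[-2√q, 2√q]`, where `|P_k| ≤ (k + 1) q^(k/2)`, so
`‖P_k(A) u‖ ≤ (k + 1) q^(k/2)`. Hence `#{y | d(x, y) > k} ≤ n² (k + 1)² q^(-k)`, and
`k = ⌊(1 + ε) log_q n⌋` makes this `O(n^(1-ε) log² n)`.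
-/

open scoped Classical
open Filter Polynomial

theorem Real.abs_sin_nat_mul_le (n : ℕ) (θ : ℝ) :
    |Real.sin (n * θ)| ≤ n * |Real.sin θ| := by
  induction n with
  | zero => simp
  | succ n ih =>
    calc |Real.sin ((n + 1 : ℕ) * θ)|
        = |Real.sin (n * θ) * Real.cos θ + Real.cos (n * θ) * Real.sin θ| := by
          rw [← Real.sin_add]; push_cast; ring_nf
      _ ≤ |Real.sin (n * θ)| * 1 + 1 * |Real.sin θ| := by
          grw [abs_add_le, abs_mul, abs_mul, Real.abs_cos_le_one, Real.abs_cos_le_one]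
      _ ≤ (n + 1 : ℕ) * |Real.sin θ| := by push_cast; linarith

namespace Polynomial

theorem Chebyshev.abs_eval_S_real_le (n : ℕ) {t : ℝ} (ht : |t| ≤ 2) :
    |(Chebyshev.S ℝ n).eval t| ≤ n + 1 := by
  obtain ⟨ht₁, ht₂⟩ := abs_le.mp ht
  set θ := Real.arccos (t / 2)
  have hcos : 2 * Real.cos θ = t := by
    rw [Real.cos_arccos (by linarith) (by linarith)]; ring
  rcases (Real.sin_nonneg_of_nonneg_of_le_pi (Real.arccos_nonneg (t / 2))
    (Real.arccos_le_pi _)).eq_or_lt with hsin | hsin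
  · have : Real.cos θ = 1 ∨ Real.cos θ = -1 :=
      sq_eq_one_iff.mp (by nlinarith [Real.sin_sq_add_cos_sq θ])
    rcases this with h | h
    · rw [← hcos, h, mul_one, Chebyshev.S_eval_two]; norm_cast
    · rw [← hcos, h, mul_neg_one, Chebyshev.S_eval_neg_two, abs_mul, ← Int.cast_abs]
      simp only [Int.abs_negOnePow]; norm_cast; simp
  · refine le_of_mul_le_mul_right ?_ hsin
    have h := Chebyshev.S_two_mul_real_cos θ n
    rw [hcos] at h
    calc |(Chebyshev.S ℝ n).eval t| * Real.sin θ = |Real.sin ((n + 1 : ℕ) * θ)| := by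
          rw [← abs_of_pos hsin, ← abs_mul, h]; push_cast; rfl
      _ ≤ (n + 1 : ℕ) * |Real.sin θ| := Real.abs_sin_nat_mul_le _ _
      _ = (n + 1) * Real.sin θ := by rw [abs_of_pos hsin]; push_cast; rfl

noncomputable def scaledChebyshevS (q : ℝ) : ℕ → ℝ[X]
  | 0 => 1
  | 1 => X
  | k + 2 => X * scaledChebyshevS q (k + 1) - C q * scaledChebyshevS q k

theorem natDegree_scaledChebyshevS_le (q : ℝ) : ∀ k, (scaledChebyshevS q k).natDegree ≤ k
  | 0 => by simp [scaledChebyshevS]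
  | 1 => natDegree_X_le
  | k + 2 => by
    have h₁ := natDegree_scaledChebyshevS_le q (k + 1)
    have h₀ := natDegree_scaledChebyshevS_le q k
    rw [scaledChebyshevS]
    refine (natDegree_sub_le _ _).trans (max_le ?_ ?_)
    · exact natDegree_mul_le.trans (by grw [natDegree_X_le, h₁]; omega)
    · exact (natDegree_C_mul_le _ _).trans (by omega)

theorem eval_scaledChebyshevS {q : ℝ} (hq : 0 < q) (x : ℝ) :
    ∀ k : ℕ, (scaledChebyshevS q k).eval x = √q ^ k * (Chebyshev.S ℝ k).eval (x / √q)
  | 0 => by simp [scaledChebyshevS]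
  | 1 => by simp [scaledChebyshevS]; field_simp
  | k + 2 => by
    have h₁ := eval_scaledChebyshevS hq x (k + 1)
    have h₀ := eval_scaledChebyshevS hq x k
    have hS := Chebyshev.S_add_two ℝ k
    push_cast at h₁ ⊢
    rw [scaledChebyshevS, hS]
    simp only [eval_sub, eval_mul, eval_X, eval_C, h₁, h₀]
    have : √q ^ 2 = q := Real.sq_sqrt hq.le
    field_simp
    linear_combination (√q * √q ^ k * eval (x / √q) (Chebyshev.S ℝ k)) * this

theorem eval_scaledChebyshevS_add_one (q : ℝ) :
    ∀ k, (scaledChebyshevS q k).eval (q + 1) = ∑ j ∈ Finset.range (k + 1), q ^ j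
  | 0 => by simp [scaledChebyshevS]
  | 1 => by simp [scaledChebyshevS, Finset.sum_range_succ]; ring
  | k + 2 => by
    rw [scaledChebyshevS, eval_sub, eval_mul, eval_mul, eval_X, eval_C,
      eval_scaledChebyshevS_add_one q (k + 1), eval_scaledChebyshevS_add_one q k,
      Finset.sum_range_succ _ (k + 2), Finset.sum_range_succ _ (k + 1)]
    ring

theorem abs_eval_scaledChebyshevS_le {q : ℝ} (hq : 0 < q) (k : ℕ) {x : ℝ}
    (hx : |x| ≤ 2 * √q) : |(scaledChebyshevS q k).eval x| ≤ (k + 1) * √q ^ k := by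
  have hsq : 0 < √q := Real.sqrt_pos.mpr hq
  rw [eval_scaledChebyshevS hq, abs_mul, abs_of_pos (pow_pos hsq k), mul_comm]
  gcongr
  exact Chebyshev.abs_eval_S_real_le k (by rw [abs_div, abs_of_pos hsq, div_le_iff₀ hsq]; exact hx)

end Polynomial

namespace Matrix

variable {ι : Type*} [Fintype ι] [DecidableEq ι]

theorem IsSymm.aeval {R : Type*} [CommSemiring R] {A : Matrix ι ι R} (hA : A.IsSymm)
    (p : R[X]) : (aeval A p).IsSymm := by
  induction p using Polynomial.induction_on' with
  | add p r hp hr => rw [map_add]; exact hp.add hr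
  | monomial n a =>
    rw [aeval_monomial, Algebra.algebraMap_eq_smul_one, smul_mul_assoc, one_mul]
    exact (hA.pow n).smul a

theorem aeval_mulVec_of_mulVec_eq_smul {R : Type*} [CommRing R] {A : Matrix ι ι R} {μ : R}
    {v : ι → R} (hv : A *ᵥ v = μ • v) (p : R[X]) : aeval A p *ᵥ v = p.eval μ • v := by
  rw [← toLinAlgEquiv'_apply, ← aeval_algHom_apply]
  exact Module.End.aeval_apply_of_mem_apply_eq_smul (by rwa [toLinAlgEquiv'_apply])

omit [DecidableEq ι] in
theorem _root_.OrthonormalBasis.dotProduct_self_eq_sum_sq {ι' : Type*} [Fintype ι']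
    (b : OrthonormalBasis ι' ℝ (EuclideanSpace ℝ ι)) (v : ι → ℝ) :
    v ⬝ᵥ v = ∑ i, (⇑(b i) ⬝ᵥ v) ^ 2 := by
  have h := b.sum_inner_mul_inner (WithLp.toLp 2 v) (WithLp.toLp 2 v)
  simp only [EuclideanSpace.inner_eq_star_dotProduct, star_trivial] at h
  simp only [sq, ← h, dotProduct_comm v]

theorem IsHermitian.aeval_mulVec_dotProduct_self_le {A : Matrix ι ι ℝ} (hA : A.IsHermitian)
    (p : ℝ[X]) {M : ℝ} {u : ι → ℝ}
    (hu : ∀ (μ : ℝ) (v : ι → ℝ), A *ᵥ v = μ • v → M < |p.eval μ| → v ⬝ᵥ u = 0) :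
    (aeval A p *ᵥ u) ⬝ᵥ (aeval A p *ᵥ u) ≤ M ^ 2 * (u ⬝ᵥ u) := by
  have hsymm : A.IsSymm := (conjTranspose_eq_transpose_of_trivial A).symm.trans hA
  set b := hA.eigenvectorBasis
  have hcoord (i : ι) :
      ⇑(b i) ⬝ᵥ (aeval A p *ᵥ u) = p.eval (hA.eigenvalues i) * (⇑(b i) ⬝ᵥ u) := by
    rw [dotProduct_mulVec, ← mulVec_transpose, (hsymm.aeval p).eq,
      aeval_mulVec_of_mulVec_eq_smul (hA.mulVec_eigenvectorBasis i), smul_dotProduct,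
      smul_eq_mul]
  rw [b.dotProduct_self_eq_sum_sq, b.dotProduct_self_eq_sum_sq, Finset.mul_sum]
  refine Finset.sum_le_sum fun i _ => ?_
  rw [hcoord, mul_pow]
  by_cases h : M < |p.eval (hA.eigenvalues i)|
  · simp [b, hu _ _ (hA.mulVec_eigenvectorBasis i) h]
  · refine mul_le_mul_of_nonneg_right ?_ (sq_nonneg _)
    rw [← sq_abs]
    exact pow_le_pow_left₀ (abs_nonneg _) (not_lt.mp h) 2

end Matrix

namespace SimpleGraph

open Matrix Finset

variable {V : Type*} [Fintype V] [DecidableEq V] (G : SimpleGraph V) [DecidableRel G.Adj]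

/-- For a `(q + 1)`-regular graph: the Ramanujan property together with the absence of the
eigenvalue `-(q + 1)`, i.e. non-bipartiteness. -/
def IsRamanujan (q : ℝ) : Prop :=
  ∀ (μ : ℝ) (v : V → ℝ), G.adjMatrix ℝ *ᵥ v = μ • v → v ≠ 0 → μ = q + 1 ∨ |μ| ≤ 2 * √q

theorem aeval_adjMatrix_apply_eq_zero {R : Type*} [CommSemiring R] {p : R[X]} {x y : V}
    (h : p.natDegree < G.dist x y) : aeval (G.adjMatrix R) p x y = 0 := by
  rw [aeval_eq_sum_range, Matrix.sum_apply]
  refine Finset.sum_eq_zero fun i hi => ?_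
  have : IsEmpty {w : G.Walk x y | w.length = i} :=
    ⟨fun w => by have := G.dist_le w.1; have := Finset.mem_range.mp hi; grind⟩
  rw [Matrix.smul_apply, adjMatrix_pow_apply_eq_card_walk, Fintype.card_eq_zero, Nat.cast_zero,
    smul_zero]

variable {G}

theorem aeval_adjMatrix_mulVec_single_sub_const_of_lt_dist {d : ℕ}
    (hreg : G.IsRegularOfDegree d) {p : ℝ[X]} {x y : V} (h : p.natDegree < G.dist x y) (c : ℝ) :
    (aeval (G.adjMatrix ℝ) p *ᵥ (Pi.single x 1 - fun _ => c)) y = -(p.eval (d : ℝ) * c) := by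
  have hyx : aeval (G.adjMatrix ℝ) p y x = 0 := G.aeval_adjMatrix_apply_eq_zero (G.dist_comm ▸ h)
  have hconst : aeval (G.adjMatrix ℝ) p *ᵥ (fun _ => c) = p.eval (d : ℝ) • fun _ => c :=
    aeval_mulVec_of_mulVec_eq_smul (by ext; simp [hreg _]) p
  simp [mulVec_sub, hyx, hconst]

theorem Connected.eq_of_adjMatrix_mulVec_eq_smul {d : ℕ} (hconn : G.Connected)
    (hreg : G.IsRegularOfDegree d) {v : V → ℝ} (hv : G.adjMatrix ℝ *ᵥ v = (d : ℝ) • v)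
    (i j : V) : v i = v j := by
  refine (lapMatrix_mulVec_eq_zero_iff_forall_reachable G).mp ?_ i j (hconn i j)
  ext z
  rw [lapMatrix_mulVec_apply, ← adjMatrix_mulVec_apply, hv, hreg z]
  simp

theorem card_lt_dist_mul_sq_le {d k : ℕ} (hreg : G.IsRegularOfDegree d) (hconn : G.Connected)
    {p : ℝ[X]} (hp : p.natDegree ≤ k) {M : ℝ}
    (hM : ∀ (μ : ℝ) (v : V → ℝ), G.adjMatrix ℝ *ᵥ v = μ • v → v ≠ 0 → μ = d ∨ |p.eval μ| ≤ M)
    (x : V) :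
    (#{y | k < G.dist x y} : ℝ) * p.eval (d : ℝ) ^ 2 ≤ (Fintype.card V : ℝ) ^ 2 * M ^ 2 := by
  set n : ℝ := (Fintype.card V : ℝ)
  have hn : 0 < n := by have := hconn.nonempty; positivity
  set P := aeval (G.adjMatrix ℝ) p
  set u : V → ℝ := Pi.single x 1 - fun _ => n⁻¹ with hu
  have hu_sum : ∑ z, u z = 0 := by simp [u, n, hn.ne']
  have hu_orth (μ : ℝ) (v : V → ℝ) (hv : G.adjMatrix ℝ *ᵥ v = μ • v) (hμ : M < |p.eval μ|) :
      v ⬝ᵥ u = 0 := by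
    rcases eq_or_ne v 0 with rfl | hv0
    · exact zero_dotProduct u
    obtain rfl : μ = d := (hM μ v hv hv0).resolve_right hμ.not_ge
    have hconst := hconn.eq_of_adjMatrix_mulVec_eq_smul hreg hv
    simp only [dotProduct, hconst _ x, ← Finset.mul_sum, hu_sum, mul_zero]
  have hu_norm : u ⬝ᵥ u ≤ 1 := by
    have : u ⬝ᵥ u = u x := by
      nth_rw 2 [hu]
      rw [dotProduct_sub, dotProduct_single_one]
      simp [dotProduct, ← Finset.sum_mul, hu_sum]
    rw [this, hu]
    simp [hn.le]
  calc (#{y | k < G.dist x y} : ℝ) * p.eval (d : ℝ) ^ 2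
      = n ^ 2 * ∑ y ∈ {y | k < G.dist x y}, (P *ᵥ u) y ^ 2 := by
        rw [Finset.sum_congr rfl fun y hy => by
          rw [aeval_adjMatrix_mulVec_single_sub_const_of_lt_dist hreg
            (hp.trans_lt (Finset.mem_filter.mp hy).2)]]
        simp only [Finset.sum_const, nsmul_eq_mul, neg_sq, mul_pow]
        field_simp
    _ ≤ n ^ 2 * ((P *ᵥ u) ⬝ᵥ (P *ᵥ u)) := by
        gcongr
        simp only [dotProduct, ← sq]
        exact Finset.sum_le_sum_of_subset_of_nonneg (Finset.subset_univ _)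
          fun _ _ _ => sq_nonneg _
    _ ≤ n ^ 2 * (M ^ 2 * 1) := by
        grw [(G.isHermitian_adjMatrix ℝ).aeval_mulVec_dotProduct_self_le p hu_orth, hu_norm]
    _ = n ^ 2 * M ^ 2 := by rw [mul_one]

theorem IsRamanujan.card_lt_dist_mul_pow_le {q : ℕ} (hram : G.IsRamanujan q) (hq : 0 < q)
    (hreg : G.IsRegularOfDegree (q + 1)) (hconn : G.Connected) (k : ℕ) (x : V) :
    (#{y | k < G.dist x y} : ℝ) * q ^ k ≤ (Fintype.card V : ℝ) ^ 2 * (k + 1) ^ 2 := by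
  have hq' : (0 : ℝ) < q := by exact_mod_cast hq
  have hcount := card_lt_dist_mul_sq_le hreg hconn (natDegree_scaledChebyshevS_le q k)
    (M := (k + 1) * √q ^ k) (fun μ v hv hv0 => (hram μ v hv hv0).imp (by push_cast; exact id)
      (abs_eval_scaledChebyshevS_le hq' k)) x
  have hval : (q : ℝ) ^ k ≤ (scaledChebyshevS q k).eval ((q + 1 : ℕ) : ℝ) := by
    rw [Nat.cast_add_one, eval_scaledChebyshevS_add_one]
    exact Finset.single_le_sum (fun j _ => by positivity) (Finset.self_mem_range_succ k)
  rw [mul_pow, ← pow_mul, mul_comm k, pow_mul, Real.sq_sqrt hq'.le] at hcount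
  refine le_of_mul_le_mul_right ?_ (pow_pos hq' k)
  calc (#{y | k < G.dist x y} : ℝ) * q ^ k * q ^ k
      = #{y | k < G.dist x y} * ((q : ℝ) ^ k) ^ 2 := by ring
    _ ≤ #{y | k < G.dist x y} * (scaledChebyshevS q k).eval ((q + 1 : ℕ) : ℝ) ^ 2 := by
        gcongr
    _ ≤ _ := hcount.trans_eq (by ring)

theorem IsRamanujan.card_lt_dist_mul_rpow_le {q : ℕ} (hram : G.IsRamanujan q) (hq : 0 < q)
    (hreg : G.IsRegularOfDegree (q + 1)) (hconn : G.Connected) {r : ℝ} (hr : 0 ≤ r) (x : V) :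
    (#{y | r < G.dist x y} : ℝ) * (q : ℝ) ^ r ≤ q * (Fintype.card V : ℝ) ^ 2 * (r + 1) ^ 2 := by
  set k := ⌊r⌋₊
  have hq' : (1 : ℝ) ≤ q := by exact_mod_cast hq
  have hsub : (#{y | r < G.dist x y} : ℝ) ≤ #{y | k < G.dist x y} := by
    refine Nat.mono_cast (Finset.card_le_card fun y hy => ?_)
    simp only [Finset.mem_filter, Finset.mem_univ, true_and] at hy ⊢
    exact_mod_cast (Nat.floor_le hr).trans_lt hy
  have hpow : (q : ℝ) ^ r ≤ q * q ^ k := by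
    calc (q : ℝ) ^ r ≤ (q : ℝ) ^ ((k : ℝ) + 1) :=
          Real.rpow_le_rpow_of_exponent_le hq' (Nat.lt_floor_add_one r).le
      _ = q * q ^ k := by rw [Real.rpow_add_one (by positivity), Real.rpow_natCast, mul_comm]
  have hk : ((k : ℝ) + 1) ^ 2 ≤ (r + 1) ^ 2 := by gcongr; exact Nat.floor_le hr
  calc (#{y | r < G.dist x y} : ℝ) * (q : ℝ) ^ r
      ≤ #{y | k < G.dist x y} * (q * q ^ k) := by gcongr
    _ = q * (#{y | k < G.dist x y} * q ^ k) := by ring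
    _ ≤ q * ((Fintype.card V : ℝ) ^ 2 * (k + 1) ^ 2) := by
        gcongr q * ?_; exact hram.card_lt_dist_mul_pow_le hq hreg hconn k x
    _ ≤ q * (Fintype.card V : ℝ) ^ 2 * (r + 1) ^ 2 := by rw [← mul_assoc]; gcongr

theorem IsRamanujan.card_lt_dist_div_card_le {q : ℕ} (hram : G.IsRamanujan q) (hq : 1 < q)
    (hreg : G.IsRegularOfDegree (q + 1)) (hconn : G.Connected) {ε : ℝ} (hε : -1 ≤ ε) (x : V) :
    (#{y | (1 + ε) * Real.logb q (Fintype.card V) < G.dist x y} : ℝ) / Fintype.card V ≤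
      q * (((1 + ε) * Real.logb q (Fintype.card V) + 1) ^ 2 / (Fintype.card V : ℝ) ^ ε) := by
  set n : ℝ := (Fintype.card V : ℝ)
  set r := (1 + ε) * Real.logb q n
  have hq₁ : (1 : ℝ) < q := by exact_mod_cast hq
  have := hconn.nonempty
  have hn : 1 ≤ n := Nat.one_le_cast.mpr Fintype.card_pos
  have hr : 0 ≤ r := mul_nonneg (by linarith) (Real.logb_nonneg hq₁ hn)
  have hqr : (q : ℝ) ^ r = n * n ^ ε := by
    rw [show r = Real.logb q n * (1 + ε) from mul_comm _ _, Real.rpow_mul (by positivity),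
      Real.rpow_logb (by positivity) hq₁.ne' (by positivity), Real.rpow_add (by positivity),
      Real.rpow_one]
  have hcount := hram.card_lt_dist_mul_rpow_le (by omega) hreg hconn hr x
  rw [hqr] at hcount
  have hnε : 0 < n ^ ε := by positivity
  calc (#{y | r < G.dist x y} : ℝ) / n
      = #{y | r < G.dist x y} * (n * n ^ ε) / (n ^ 2 * n ^ ε) := by field_simp
    _ ≤ q * n ^ 2 * (r + 1) ^ 2 / (n ^ 2 * n ^ ε) := by gcongr
    _ = q * ((r + 1) ^ 2 / n ^ ε) := by field_simp

omit [DecidableEq V] in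
theorem isRamanujan_of_normalized {q : ℝ} (hq : 0 ≤ q)
    (hram : ∀ (μ : ℝ) (f : V → ℝ), f ≠ 0 →
      (∀ x, ∑ y ∈ G.neighborFinset x, f y = (q + 1) * μ * f x) →
      μ = 1 ∨ |μ| ≤ 2 * √q / (q + 1)) :
    G.IsRamanujan q := by
  intro μ v hv hv0
  have hq1 : 0 < q + 1 := by linarith
  refine (hram (μ / (q + 1)) v hv0 fun x => ?_).imp (fun h => ?_) fun h => ?_
  · rw [← G.adjMatrix_mulVec_apply, hv]
    field_simp
    rfl
  · field_simp at h; exact h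
  · rwa [abs_div, abs_of_pos hq1, div_le_div_iff_of_pos_right hq1] at h

end SimpleGraph

theorem Real.tendsto_mul_logb_add_sq_div_rpow_atTop (b a c : ℝ) {ε : ℝ} (hε : 0 < ε) :
    Tendsto (fun t => (a * Real.logb b t + c) ^ 2 / t ^ ε) atTop (nhds 0) := by
  have hlittle : (fun t => a * Real.logb b t + c) =o[atTop] fun t => t ^ (ε / 2) := by
    have hlog := (isLittleO_log_rpow_atTop (half_pos hε)).const_mul_left (a / Real.log b)
    refine (hlog.congr_left fun t => ?_).add (Asymptotics.isLittleO_const_left.2 <| Or.inr <|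
      tendsto_norm_atTop_atTop.comp (tendsto_rpow_atTop (half_pos hε)))
    rw [Real.logb]; ring
  have hsq := hlittle.tendsto_div_nhds_zero.pow 2
  rw [zero_pow two_ne_zero] at hsq
  refine hsq.congr' ?_
  filter_upwards [eventually_ge_atTop 0] with t ht
  rw [div_pow, ← Real.rpow_natCast (t ^ _), ← Real.rpow_mul ht]
  norm_num

theorem stmt5_general (q : ℕ) (hq : 2 ≤ q) (V : ℕ → Type) [∀ m, Fintype (V m)]
    (G : ∀ m, SimpleGraph (V m))
    (hreg : ∀ m, (G m).IsRegularOfDegree (q + 1))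
    (hconn : ∀ m, (G m).Connected)
    (hcard : Tendsto (fun m => Fintype.card (V m)) atTop atTop)
    (hram : ∀ m (μ : ℝ) (f : V m → ℝ), f ≠ 0 →
      (∀ x, ∑ y ∈ (G m).neighborFinset x, f y = ((q : ℝ) + 1) * μ * f x) →
      μ = 1 ∨ |μ| ≤ 2 * Real.sqrt q / ((q : ℝ) + 1)) :
    ∀ ε : ℝ, 0 < ε → ∀ x : (∀ m, V m),
      Tendsto (fun m =>
        ((Finset.univ.filter (fun y =>
            (1 + ε) * Real.logb q (Fintype.card (V m)) < ((G m).dist (x m) y : ℝ))).card : ℝ)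
          / (Fintype.card (V m) : ℝ))
        atTop (nhds 0) := by
  intro ε hε x
  have hlim := ((Real.tendsto_mul_logb_add_sq_div_rpow_atTop q (1 + ε) 1 hε).const_mul
    (q : ℝ)).comp (tendsto_natCast_atTop_atTop.comp hcard)
  rw [mul_zero] at hlim
  refine squeeze_zero (fun m => by positivity) (fun m => ?_) hlim
  exact ((G m).isRamanujan_of_normalized (Nat.cast_nonneg q) (hram m)).card_lt_dist_div_card_le
    (by omega) (hreg m) (hconn m) (by linarith) (x m)

/-- In a family of `(q+1)`-regular non-bipartite Ramanujan graphs with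
`n → ∞`, for every `ε > 0` and every choice of base vertices `x₀`, the number of
vertices at distance greater than `(1+ε) log_q n` from `x₀` is `o_ε(n)`. -/
theorem stmt5 (q : ℕ) (hq : 2 ≤ q) (V : ℕ → Type) [∀ m, Fintype (V m)]
    (G : ∀ m, SimpleGraph (V m))
    (hreg : ∀ m, (G m).IsRegularOfDegree (q + 1))
    (hconn : ∀ m, (G m).Connected)
    (hnb : ∀ m, ¬ (G m).Colorable 2)
    (hcard : Tendsto (fun m => Fintype.card (V m)) atTop atTop)
    (hram : ∀ m (μ : ℝ) (f : V m → ℝ), f ≠ 0 →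
      (∀ x, ∑ y ∈ (G m).neighborFinset x, f y = ((q : ℝ) + 1) * μ * f x) →
      μ = 1 ∨ |μ| ≤ 2 * Real.sqrt q / ((q : ℝ) + 1)) :
    ∀ ε : ℝ, 0 < ε → ∀ x : (∀ m, V m),
      Tendsto (fun m =>
        ((Finset.univ.filter (fun y =>
            (1 + ε) * Real.logb q (Fintype.card (V m)) < ((G m).dist (x m) y : ℝ))).card : ℝ)
          / (Fintype.card (V m) : ℝ))
        atTop (nhds 0) :=
  stmt5_general q hq V G hreg hconn hcard hram
end

section
/- Let X be a finite (q+1)-regular non-bipartite graph on n vertices, x₀ a vertex, and A the normalized adjacency operator. For every ε₀ > 0 and every integer k < (1−ε₀)·((q+1)/(q−1))·log_q(n), the total variation distance satisfies ‖A^k δ_{x₀} − π‖₁ = 2 − o_{ε₀}(1) as n → ∞. -/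
open scoped Classical
open Filter

open Finset Matrix Real Topology

/-!
Let `p_k = A^k δ_x` and `s ≥ 1`. Every vertex `y ≠ x` reachable from `x` has a neighbour
closer to `x`, so `f y = s ^ d(x, y)` satisfies `A f ≤ μ f + s` with
`μ = (q s + s⁻¹) / (q + 1)`, hence `⟨p_k, f⟩ ≤ (1 + k s) μ^k`. By Markov's inequality
`p_k` gives mass at most `(1 + k s) μ^k / s^r` to the complement of the ball of radius
`r = ⌊(1 - ε/2) log_q n⌋`. Since `μ - 1 ≈ (q-1)/(q+1) · (s - 1)` and `log s ≈ s - 1`, the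
choice `s = 1 + ε/4` makes this bound tend to `0` when `k ≤ (1 - ε) (q+1)/(q-1) log_q n`.
The ball has at most `4 q^r ≤ 4 n^(1 - ε/2)` vertices, so the uniform distribution gives it
mass `o(1)`, and the `ℓ¹` distance is `2 - o(1)`.
-/

section Uniform

variable {V : Type*} [Fintype V] {p : V → ℝ}

lemma card_ne_zero_of_sum_eq_one (hp : ∑ y, p y = 1) : (Fintype.card V : ℝ) ≠ 0 := by
  have : (univ : Finset V).Nonempty := nonempty_of_sum_ne_zero (by rw [hp]; exact one_ne_zero)
  exact_mod_cast (card_pos.mpr this).ne'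

lemma sum_abs_sub_inv_card_le_two (hp0 : ∀ y, 0 ≤ p y) (hp : ∑ y, p y = 1) :
    ∑ y, |p y - 1 / Fintype.card V| ≤ 2 := by
  have hn := card_ne_zero_of_sum_eq_one hp
  calc ∑ y, |p y - 1 / Fintype.card V| ≤ ∑ y, (p y + 1 / Fintype.card V) :=
        sum_le_sum fun y _ => (abs_sub _ _).trans_eq (by
          rw [abs_of_nonneg (hp0 y), abs_of_nonneg (by positivity)])
    _ = 2 := by
        rw [sum_add_distrib, hp, sum_const, card_univ, nsmul_eq_mul]
        field_simp
        norm_num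

lemma two_mul_sub_le_sum_abs_sub_inv_card (hp : ∑ y, p y = 1) (A : Finset V) :
    2 * (∑ y ∈ A, p y - #A / Fintype.card V) ≤ ∑ y, |p y - 1 / Fintype.card V| := by
  have hn := card_ne_zero_of_sum_eq_one hp
  have hcompl : ∑ y ∈ Aᶜ, p y = 1 - ∑ y ∈ A, p y := by
    rw [← hp, ← sum_add_sum_compl A p]; ring
  have hcard : (#Aᶜ : ℝ) = Fintype.card V - #A := by
    rw [card_compl, Nat.cast_sub (card_le_univ A)]
  calc 2 * (∑ y ∈ A, p y - #A / Fintype.card V)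
      = ∑ y ∈ A, (p y - 1 / Fintype.card V) + ∑ y ∈ Aᶜ, -(p y - 1 / Fintype.card V) := by
        simp only [sum_neg_distrib, sum_sub_distrib, sum_const, nsmul_eq_mul, hcompl, hcard]
        field_simp
        ring
    _ ≤ ∑ y ∈ A, |p y - 1 / Fintype.card V| + ∑ y ∈ Aᶜ, |p y - 1 / Fintype.card V| :=
        add_le_add (sum_le_sum fun y _ => le_abs_self _) (sum_le_sum fun y _ => neg_le_abs _)
    _ = ∑ y, |p y - 1 / Fintype.card V| := sum_add_sum_compl A _

end Uniform

/-- On the `(q+1)`-regular tree, `y ↦ s ^ d(x, y)` is an eigenfunction of the normalized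
adjacency operator away from the root `x`, with this eigenvalue. -/
noncomputable def driftFactor (q : ℕ) (s : ℝ) : ℝ := (q * s + s⁻¹) / (q + 1)

lemma one_le_driftFactor {q : ℕ} (hq : 1 ≤ q) {s : ℝ} (hs : 1 ≤ s) :
    1 ≤ driftFactor q s := by
  have hq' : (1 : ℝ) ≤ q := by exact_mod_cast hq
  have hinv : s⁻¹ * s = 1 := inv_mul_cancel₀ (by positivity)
  have hinv_le : s⁻¹ ≤ q := (inv_le_one_of_one_le₀ hs).trans hq'
  rw [driftFactor, le_div_iff₀ (by positivity)]
  nlinarith [mul_nonneg (sub_nonneg.2 hs) (sub_nonneg.2 hinv_le)]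

namespace SimpleGraph

lemma exists_adj_dist_add_one_eq {V : Type*} {G : SimpleGraph V} {x y : V}
    (h : G.dist x y ≠ 0) :
    ∃ w, G.Adj y w ∧ G.dist x w + 1 = G.dist x y := by
  obtain ⟨p, hp⟩ := G.exists_walk_of_dist_ne_zero (G.dist_comm (u := x) ▸ h)
  cases p with
  | nil => simp at h
  | cons hadj p =>
    refine ⟨_, hadj, ?_⟩
    have hw : G.dist x _ ≤ p.length := G.dist_comm ▸ G.dist_le p
    rw [Walk.length_cons, G.dist_comm] at hp
    rcases hadj.diff_dist_adj (u := x) with h' | h' | h' <;> omega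

variable {V : Type*} [Fintype V] {G : SimpleGraph V} [DecidableRel G.Adj] {d q : ℕ} {x : V}

variable (G) in
noncomputable def walkDist (d : ℕ) (x : V) (k : ℕ) : V → ℝ :=
  ((d : ℝ)⁻¹ • G.adjMatrix ℝ) ^ k *ᵥ fun z => if z = x then 1 else 0

lemma walkDist_apply (k : ℕ) (y : V) :
    G.walkDist d x k y = Fintype.card {p : G.Walk y x | p.length = k} / (d : ℝ) ^ k := by
  simp [walkDist, smul_pow, mulVec, dotProduct, adjMatrix_pow_apply_eq_card_walk, div_eq_inv_mul]

lemma walkDist_nonneg (k : ℕ) (y : V) : 0 ≤ G.walkDist d x k y := by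
  rw [walkDist_apply]; positivity

lemma reachable_of_walkDist_ne_zero {k : ℕ} {y : V} (h : G.walkDist d x k y ≠ 0) :
    G.Reachable x y := by
  rw [walkDist_apply] at h
  obtain ⟨⟨p, -⟩⟩ : Nonempty {p : G.Walk y x | p.length = k} :=
    Fintype.card_pos_iff.mp (Nat.pos_of_ne_zero fun h0 => h (by simp [h0]))
  exact p.reachable.symm

lemma walkDist_zero : G.walkDist d x 0 = fun z => if z = x then 1 else 0 := by
  simp [walkDist]

lemma walkDist_succ (k : ℕ) :
    G.walkDist d x (k + 1) = ((d : ℝ)⁻¹ • G.adjMatrix ℝ) *ᵥ G.walkDist d x k := by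
  rw [walkDist, pow_succ', ← mulVec_mulVec, walkDist]

lemma smul_adjMatrix_mulVec_dotProduct (c : ℝ) (p f : V → ℝ) :
    (c • G.adjMatrix ℝ) *ᵥ p ⬝ᵥ f = p ⬝ᵥ (c • G.adjMatrix ℝ) *ᵥ f := by
  rw [dotProduct_comm, dotProduct_mulVec, ← mulVec_transpose, transpose_smul, transpose_adjMatrix,
    dotProduct_comm]

lemma smul_adjMatrix_mulVec_one (hreg : G.IsRegularOfDegree d) (hd : d ≠ 0) :
    ((d : ℝ)⁻¹ • G.adjMatrix ℝ) *ᵥ (1 : V → ℝ) = 1 := by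
  ext y
  simp [Matrix.smul_mulVec, hreg y, hd]

lemma sum_walkDist (hreg : G.IsRegularOfDegree d) (hd : d ≠ 0) (k : ℕ) :
    ∑ y, G.walkDist d x k y = 1 := by
  induction k with
  | zero => simp [walkDist_zero]
  | succ k ih =>
    rw [← dotProduct_one, walkDist_succ, smul_adjMatrix_mulVec_dotProduct,
      smul_adjMatrix_mulVec_one hreg hd, dotProduct_one, ih]

lemma walkDist_dotProduct_le (hreg : G.IsRegularOfDegree d) (hd : d ≠ 0) {f : V → ℝ}
    {μ b : ℝ} (hμ : 1 ≤ μ) (hb : 0 ≤ b)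
    (hf : ∀ y, (((d : ℝ)⁻¹ • G.adjMatrix ℝ) *ᵥ f) y ≤ μ * f y + b) (k : ℕ) :
    G.walkDist d x k ⬝ᵥ f ≤ (f x + k * b) * μ ^ k := by
  induction k with
  | zero => simp [walkDist_zero, dotProduct]
  | succ k ih =>
    have hstep : G.walkDist d x (k + 1) ⬝ᵥ f ≤ μ * (G.walkDist d x k ⬝ᵥ f) + b := calc
      G.walkDist d x (k + 1) ⬝ᵥ f
          = ∑ y, G.walkDist d x k y * (((d : ℝ)⁻¹ • G.adjMatrix ℝ) *ᵥ f) y := by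
        rw [walkDist_succ, smul_adjMatrix_mulVec_dotProduct, dotProduct]
      _ ≤ ∑ y, G.walkDist d x k y * (μ * f y + b) :=
        sum_le_sum fun y _ => mul_le_mul_of_nonneg_left (hf y) (walkDist_nonneg k y)
      _ = μ * (G.walkDist d x k ⬝ᵥ f) + b := by
        simp only [mul_add, sum_add_distrib, ← sum_mul, sum_walkDist hreg hd, one_mul,
          dotProduct, mul_sum]
        congr 1
        exact sum_congr rfl fun y _ => by ring
    have hbμ : b ≤ b * μ ^ (k + 1) := le_mul_of_one_le_right hb (one_le_pow₀ hμ)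
    calc G.walkDist d x (k + 1) ⬝ᵥ f ≤ μ * ((f x + k * b) * μ ^ k) + b :=
          hstep.trans (by gcongr)
      _ ≤ (f x + (k + 1 : ℕ) * b) * μ ^ (k + 1) := by push_cast; linear_combination hbμ

lemma sum_neighborFinset_pow_dist_le (hreg : G.IsRegularOfDegree (q + 1)) {s : ℝ} (hs : 1 ≤ s)
    (y : V) :
    ∑ z ∈ G.neighborFinset y, s ^ G.dist x z
      ≤ (q * s + s⁻¹) * s ^ G.dist x y + (q + 1) * s := by
  have hnbr (z : V) (hz : z ∈ G.neighborFinset y) : s ^ G.dist x z ≤ s * s ^ G.dist x y := by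
    rw [← pow_succ']
    refine pow_le_pow_right₀ hs ?_
    rcases ((G.mem_neighborFinset y z).mp hz).diff_dist_adj (u := x) with h | h | h <;> omega
  by_cases h : G.dist x y = 0
  · calc ∑ z ∈ G.neighborFinset y, s ^ G.dist x z ≤ ∑ z ∈ G.neighborFinset y, s :=
          sum_le_sum (by simpa [h] using hnbr)
      _ = (q + 1) * s := by simp [card_neighborFinset_eq_degree, hreg y]
      _ ≤ _ := le_add_of_nonneg_left (by positivity)
  obtain ⟨w, hadj, hw⟩ := exists_adj_dist_add_one_eq h
  have hwN : w ∈ G.neighborFinset y := (G.mem_neighborFinset y w).mpr hadj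
  have hpw : s ^ G.dist x w = s⁻¹ * s ^ G.dist x y := by
    rw [← hw, pow_succ]; field_simp
  rw [← add_sum_erase _ _ hwN, hpw]
  calc s⁻¹ * s ^ G.dist x y + ∑ z ∈ (G.neighborFinset y).erase w, s ^ G.dist x z
      ≤ s⁻¹ * s ^ G.dist x y + ∑ z ∈ (G.neighborFinset y).erase w, s * s ^ G.dist x y :=
        by gcongr with z hz; exact hnbr z (mem_of_mem_erase hz)
    _ = (q * s + s⁻¹) * s ^ G.dist x y := by
        rw [sum_const, card_erase_of_mem hwN, card_neighborFinset_eq_degree, hreg y]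
        simp only [add_tsub_cancel_right, nsmul_eq_mul]
        ring
    _ ≤ _ := le_add_of_nonneg_right (by positivity)

lemma smul_adjMatrix_mulVec_pow_dist_le (hreg : G.IsRegularOfDegree (q + 1)) {s : ℝ}
    (hs : 1 ≤ s) (y : V) :
    ((((q + 1 : ℕ) : ℝ)⁻¹ • G.adjMatrix ℝ) *ᵥ fun z => s ^ G.dist x z) y
      ≤ driftFactor q s * s ^ G.dist x y + s := by
  rw [Matrix.smul_mulVec, Pi.smul_apply, adjMatrix_mulVec_apply, smul_eq_mul, driftFactor]
  have hq : (0 : ℝ) < q + 1 := by positivity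
  push_cast
  rw [inv_mul_le_iff₀ hq]
  calc _ ≤ (q * s + s⁻¹) * s ^ G.dist x y + (q + 1) * s :=
        sum_neighborFinset_pow_dist_le hreg hs y
    _ = _ := by field_simp

lemma walkDist_dotProduct_pow_dist_le (hreg : G.IsRegularOfDegree (q + 1)) (hq : 1 ≤ q)
    {s : ℝ} (hs : 1 ≤ s) (k : ℕ) :
    G.walkDist (q + 1) x k ⬝ᵥ (fun z => s ^ G.dist x z)
      ≤ (1 + k * s) * driftFactor q s ^ k := by
  simpa using walkDist_dotProduct_le (x := x) hreg q.succ_ne_zero (one_le_driftFactor hq hs)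
    (by positivity) (smul_adjMatrix_mulVec_pow_dist_le (x := x) hreg hs) k

variable (G) in
/-- Reachability has to be required: `G.dist x y = 0` for `y` not reachable from `x`. -/
noncomputable def closedBall (x : V) (r : ℕ) : Finset V :=
  {y | G.Reachable x y ∧ G.dist x y ≤ r}

lemma card_dist_eq_one_le (hreg : G.IsRegularOfDegree (q + 1)) :
    #{y | G.dist x y = 1} ≤ q + 1 := by
  rw [← hreg x, ← card_neighborFinset_eq_degree]
  exact card_le_card fun y hy => by simpa using hy

lemma card_dist_eq_add_two_le (hreg : G.IsRegularOfDegree (q + 1)) (d : ℕ) :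
    #{y | G.dist x y = d + 2} ≤ q * #{y | G.dist x y = d + 1} := by
  -- Each vertex at distance `d + 2` has a neighbour at distance `d + 1`, and each vertex at
  -- distance `d + 1` has at most `q` neighbours at distance `d + 2`, one edge going inwards.
  rw [← mul_one #{y | G.dist x y = d + 2}, mul_comm q]
  refine card_mul_le_card_mul G.Adj (fun y hy => ?_) (fun z hz => ?_)
  · obtain ⟨w, hadj, hw⟩ := exists_adj_dist_add_one_eq (G := G) (x := x) (y := y)
      (by simp at hy; omega)
    exact card_pos.mpr ⟨w, by simp at hy ⊢; exact ⟨by omega, hadj⟩⟩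
  · simp only [mem_filter, mem_univ, true_and] at hz
    obtain ⟨w, hadj, hw⟩ := exists_adj_dist_add_one_eq (G := G) (x := x) (y := z) (by omega)
    have hwN : w ∈ G.neighborFinset z := (G.mem_neighborFinset z w).mpr hadj
    calc #(bipartiteBelow G.Adj {y | G.dist x y = d + 2} z)
        ≤ #((G.neighborFinset z).erase w) := card_le_card fun y hy => by
          simp only [mem_bipartiteBelow, mem_filter, mem_univ, true_and] at hy
          simp only [mem_erase, mem_neighborFinset]
          exact ⟨by rintro rfl; omega, hy.2.symm⟩
      _ = q := by rw [card_erase_of_mem hwN, card_neighborFinset_eq_degree, hreg z]; rfl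

lemma card_dist_eq_succ_le (hreg : G.IsRegularOfDegree (q + 1)) (hq : 1 ≤ q) (d : ℕ) :
    #{y | G.dist x y = d + 1} ≤ 2 * q ^ (d + 1) := by
  induction d with
  | zero =>
    have := card_dist_eq_one_le (x := x) hreg
    simp only [zero_add, pow_one]
    omega
  | succ d ih =>
    calc #{y | G.dist x y = d + 2} ≤ q * #{y | G.dist x y = d + 1} :=
          card_dist_eq_add_two_le hreg d
      _ ≤ q * (2 * q ^ (d + 1)) := Nat.mul_le_mul_left q ih
      _ = 2 * q ^ (d + 1 + 1) := by ring

lemma card_closedBall_le (hreg : G.IsRegularOfDegree (q + 1)) (hq : 2 ≤ q) (r : ℕ) :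
    #(G.closedBall x r) ≤ 4 * q ^ r := by
  induction r with
  | zero =>
    have : G.closedBall x 0 ⊆ {x} := fun y hy => by
      simp only [closedBall, mem_filter, mem_univ, true_and, nonpos_iff_eq_zero] at hy
      simp [(hy.1.dist_eq_zero_iff.mp hy.2).symm]
    linarith [card_le_card this, card_singleton x]
  | succ r ih =>
    have hsplit :
        G.closedBall x (r + 1) ⊆ G.closedBall x r ∪ ({y | G.dist x y = r + 1} : Finset V) :=
      fun y hy => by
        simp only [closedBall, mem_union, mem_filter, mem_univ, true_and] at hy ⊢
        exact (Nat.lt_or_eq_of_le hy.2).imp (fun h => ⟨hy.1, Nat.le_of_lt_succ h⟩) id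
    calc #(G.closedBall x (r + 1)) ≤ #(G.closedBall x r) + #{y | G.dist x y = r + 1} :=
          (card_le_card hsplit).trans (card_union_le _ _)
      _ ≤ 4 * q ^ r + 2 * q ^ (r + 1) := add_le_add ih (card_dist_eq_succ_le hreg (by omega) r)
      _ ≤ 4 * q ^ (r + 1) := by rw [pow_succ]; nlinarith [Nat.zero_le (q ^ r)]

lemma sum_compl_closedBall_walkDist_le (hreg : G.IsRegularOfDegree (q + 1)) (hq : 1 ≤ q)
    {s : ℝ} (hs : 1 ≤ s) (k r : ℕ) :
    ∑ y ∈ (G.closedBall x r)ᶜ, G.walkDist (q + 1) x k y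
      ≤ (1 + k * s) * driftFactor q s ^ k / s ^ r := by
  rw [le_div_iff₀ (by positivity), sum_mul]
  calc ∑ y ∈ (G.closedBall x r)ᶜ, G.walkDist (q + 1) x k y * s ^ r
      ≤ ∑ y ∈ (G.closedBall x r)ᶜ, G.walkDist (q + 1) x k y * s ^ G.dist x y := by
        refine sum_le_sum fun y hy => ?_
        rcases eq_or_ne (G.walkDist (q + 1) x k y) 0 with h | h
        · simp [h]
        have hr : r < G.dist x y := by
          simpa [closedBall, reachable_of_walkDist_ne_zero h] using hy
        exact mul_le_mul_of_nonneg_left (pow_le_pow_right₀ hs hr.le) (walkDist_nonneg k y)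
    _ ≤ G.walkDist (q + 1) x k ⬝ᵥ (fun z => s ^ G.dist x z) :=
        sum_le_univ_sum_of_nonneg fun y => mul_nonneg (walkDist_nonneg k y) (by positivity)
    _ ≤ (1 + k * s) * driftFactor q s ^ k := walkDist_dotProduct_pow_dist_le hreg hq hs k

theorem two_sub_le_sum_abs_walkDist_sub (hreg : G.IsRegularOfDegree (q + 1)) (hq : 2 ≤ q)
    {s : ℝ} (hs : 1 ≤ s) (k r : ℕ) :
    2 - 2 * ((1 + k * s) * driftFactor q s ^ k / s ^ r) - 8 * (q ^ r / Fintype.card V)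
      ≤ ∑ y, |G.walkDist (q + 1) x k y - 1 / Fintype.card V| := by
  have hsum := sum_walkDist (x := x) hreg q.succ_ne_zero k
  have htail := sum_compl_closedBall_walkDist_le (x := x) hreg (by omega) hs k r
  have hball :
      (#(G.closedBall x r) : ℝ) / Fintype.card V ≤ 4 * (q ^ r / Fintype.card V) := by
    rw [← mul_div_assoc]
    gcongr
    exact_mod_cast card_closedBall_le hreg hq r
  have hsplit := sum_add_sum_compl (G.closedBall x r) (G.walkDist (q + 1) x k)
  linarith [two_mul_sub_le_sum_abs_sub_inv_card hsum (G.closedBall x r)]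

end SimpleGraph

lemma driftFactor_gap {q : ℕ} (hq : 2 ≤ q) {ε : ℝ} (hε : 0 < ε) (hε1 : ε ≤ 1) :
    (1 - ε) * ((q + 1) / (q - 1)) * (driftFactor q (1 + ε / 4) - 1)
      < (1 - ε / 2) * Real.log (1 + ε / 4) := by
  have hq' : (2 : ℝ) ≤ q := by exact_mod_cast hq
  set t := ε / 4 with ht
  have ht0 : 0 < t := by positivity
  set u := (1 + t)⁻¹ with hu
  have hut : u * (1 + t) = 1 := inv_mul_cancel₀ (by positivity)
  have hu_le : u ≤ 1 - t + t ^ 2 := by nlinarith [pow_pos ht0 3]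
  have hdrift : ((q + 1) / (q - 1)) * (driftFactor q (1 + t) - 1) ≤ t * (1 + t) := by
    have hq1 : (q : ℝ) - 1 ≠ 0 := by linarith
    rw [show ((q + 1) / (q - 1)) * (driftFactor q (1 + t) - 1) = (q * t + u - 1) / (q - 1) by
      rw [driftFactor, ← hu]; field_simp; ring, div_le_iff₀ (by linarith)]
    nlinarith
  have hlog : t * u ≤ Real.log (1 + t) := by
    have := Real.one_sub_inv_le_log_of_pos (by positivity : (0 : ℝ) < 1 + t)
    rw [← hu] at this
    linarith
  calc (1 - ε) * ((q + 1) / (q - 1)) * (driftFactor q (1 + t) - 1)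
      ≤ (1 - ε) * (t * (1 + t)) := by
        rw [mul_assoc]; exact mul_le_mul_of_nonneg_left hdrift (by linarith)
    _ < (1 - ε / 2) * (t * u) := by
        -- `(1 - ε) (1 + ε/4)² = 1 - ε/2 - 7ε²/16 - ε³/16`
        rw [ht] at hut ⊢; nlinarith [mul_pos hε hε]
    _ ≤ (1 - ε / 2) * Real.log (1 + t) := mul_le_mul_of_nonneg_left hlog (by linarith)

lemma pow_div_pow_le_exp {μ s α β L : ℝ} {k r : ℕ} (hμ : 1 ≤ μ) (hs : 1 ≤ s)
    (hk : k ≤ α * L) (hr : β * L - 1 ≤ r) :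
    μ ^ k / s ^ r ≤ s * exp (-(β * log s - α * (μ - 1)) * L) := by
  have hμk : μ ^ k ≤ exp (α * L * (μ - 1)) := calc
    μ ^ k ≤ exp (μ - 1) ^ k :=
      pow_le_pow_left₀ (by linarith) (by linarith [add_one_le_exp (μ - 1)]) k
    _ = exp (k * (μ - 1)) := (exp_nat_mul _ _).symm
    _ ≤ exp (α * L * (μ - 1)) := exp_le_exp.2 (mul_le_mul_of_nonneg_right hk (by linarith))
  have hsr : exp ((β * L - 1) * log s) ≤ s ^ r := calc
    exp ((β * L - 1) * log s) ≤ exp (r * log s) :=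
      exp_le_exp.2 (mul_le_mul_of_nonneg_right hr (log_nonneg hs))
    _ = s ^ r := by rw [exp_nat_mul, exp_log (by linarith)]
  calc μ ^ k / s ^ r ≤ exp (α * L * (μ - 1)) / exp ((β * L - 1) * log s) :=
        div_le_div₀ (exp_pos _).le hμk (exp_pos _) hsr
    _ = s * exp (-(β * log s - α * (μ - 1)) * L) := by
        rw [← exp_sub, show α * L * (μ - 1) - (β * L - 1) * log s
          = log s + -(β * log s - α * (μ - 1)) * L by ring, exp_add, exp_log (by linarith)]

lemma tendsto_add_mul_mul_exp_neg_atTop (a b : ℝ) {c : ℝ} (hc : 0 < c) :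
    Tendsto (fun L => (a + b * L) * exp (-c * L)) atTop (𝓝 0) := by
  have h0 := tendsto_rpow_mul_exp_neg_mul_atTop_nhds_zero 0 c hc
  have h1 := tendsto_rpow_mul_exp_neg_mul_atTop_nhds_zero 1 c hc
  simp only [rpow_zero, rpow_one, one_mul] at h0 h1
  simpa [add_mul, mul_assoc] using (h0.const_mul a).add (h1.const_mul b)

lemma tendsto_pow_floor_mul_logb_div_atTop {b δ : ℝ} (hb : 1 < b) (hδ : 0 < δ)
    (hδ1 : δ ≤ 1) :
    Tendsto (fun n : ℝ => b ^ ⌊(1 - δ) * logb b n⌋₊ / n) atTop (𝓝 0) := by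
  refine squeeze_zero' ?_ ?_ (tendsto_rpow_neg_atTop hδ)
  · filter_upwards [eventually_gt_atTop 0] with n hn
    positivity
  filter_upwards [eventually_ge_atTop 1] with n hn
  have hL : 0 ≤ (1 - δ) * logb b n := mul_nonneg (by linarith) (logb_nonneg hb hn)
  calc b ^ ⌊(1 - δ) * logb b n⌋₊ / n ≤ b ^ ((1 - δ) * logb b n) / n := by
        gcongr
        rw [← rpow_natCast]
        exact rpow_le_rpow_of_exponent_le hb.le (Nat.floor_le hL)
    _ = n ^ (-δ) := by
        rw [mul_comm, rpow_mul (by linarith), rpow_logb (by linarith) hb.ne' (by linarith),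
          ← rpow_sub_one (by linarith)]
        ring_nf

lemma tendsto_one_add_mul_pow_div_pow_floor {ι : Type*} {l : Filter ι} {μ s α β : ℝ}
    (hμ : 1 ≤ μ) (hs : 1 ≤ s) (hc : 0 < β * log s - α * (μ - 1)) {L : ι → ℝ}
    (hL : Tendsto L l atTop) {k : ι → ℕ} (hk : ∀ i, (k i : ℝ) ≤ α * L i) :
    Tendsto (fun i => (1 + k i * s) * μ ^ k i / s ^ ⌊β * L i⌋₊) l (𝓝 0) := by
  set c := β * log s - α * (μ - 1)
  have hbound : Tendsto (fun i => s * ((1 + α * s * L i) * exp (-c * L i))) l (𝓝 0) := by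
    have h := (tendsto_add_mul_mul_exp_neg_atTop 1 (α * s) hc).const_mul s
    rw [mul_zero] at h
    exact h.comp hL
  have hμ0 : 0 ≤ μ := zero_le_one.trans hμ
  refine squeeze_zero (fun i => by positivity) (fun i => ?_) hbound
  have hks : k i * s ≤ α * s * L i := by
    nlinarith [mul_le_mul_of_nonneg_right (hk i) (by positivity : 0 ≤ s)]
  have hr : β * L i - 1 ≤ ⌊β * L i⌋₊ := by linarith [Nat.lt_floor_add_one (β * L i)]
  calc (1 + k i * s) * μ ^ k i / s ^ ⌊β * L i⌋₊
      = (1 + k i * s) * (μ ^ k i / s ^ ⌊β * L i⌋₊) := mul_div_assoc _ _ _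
    _ ≤ (1 + α * s * L i) * (s * exp (-c * L i)) := by
      refine mul_le_mul (by linarith) (pow_div_pow_le_exp hμ hs (hk i) hr) (by positivity) ?_
      nlinarith [(k i).cast_nonneg (α := ℝ)]
    _ = s * ((1 + α * s * L i) * exp (-c * L i)) := by ring

theorem tendsto_sum_abs_walkDist_sub_inv_card {q : ℕ} (hq : 2 ≤ q) {V : ℕ → Type*}
    [∀ m, Fintype (V m)] {G : ∀ m, SimpleGraph (V m)}
    (hreg : ∀ m, (G m).IsRegularOfDegree (q + 1))
    (hcard : Tendsto (fun m => Fintype.card (V m)) atTop atTop) {ε : ℝ} (hε : 0 < ε)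
    (hε1 : ε ≤ 1) (x : ∀ m, V m) {k : ℕ → ℕ}
    (hk : ∀ m, (k m : ℝ) ≤ (1 - ε) * ((q + 1) / (q - 1)) * logb q (Fintype.card (V m))) :
    Tendsto (fun m => ∑ y, |(G m).walkDist (q + 1) (x m) (k m) y - 1 / Fintype.card (V m)|)
      atTop (𝓝 2) := by
  have hs : 1 ≤ 1 + ε / 4 := by linarith
  have hq1 : (1 : ℝ) < q := by exact_mod_cast hq
  have hn : Tendsto (fun m => (Fintype.card (V m) : ℝ)) atTop atTop :=
    tendsto_natCast_atTop_atTop.comp hcard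
  have htail := tendsto_one_add_mul_pow_div_pow_floor (one_le_driftFactor (by omega) hs) hs
    (sub_pos.2 (driftFactor_gap hq hε hε1)) ((tendsto_logb_atTop hq1).comp hn) hk
  have hball := (tendsto_pow_floor_mul_logb_div_atTop hq1 (half_pos hε) (by linarith)).comp hn
  refine tendsto_of_tendsto_of_tendsto_of_le_of_le ?_ tendsto_const_nhds
    (fun m => (G m).two_sub_le_sum_abs_walkDist_sub (hreg m) hq hs (k m)
      ⌊(1 - ε / 2) * logb q (Fintype.card (V m))⌋₊)
    (fun m => sum_abs_sub_inv_card_le_two (fun y => SimpleGraph.walkDist_nonneg _ y)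
      (SimpleGraph.sum_walkDist (hreg m) q.succ_ne_zero _))
  simpa using (tendsto_const_nhds.sub (htail.const_mul 2)).sub (hball.const_mul 8)

theorem stmt11_general (q : ℕ) (hq : 2 ≤ q) (V : ℕ → Type) [∀ m, Fintype (V m)]
    (G : ∀ m, SimpleGraph (V m))
    (hreg : ∀ m, (G m).IsRegularOfDegree (q + 1))
    (hcard : Tendsto (fun m => Fintype.card (V m)) atTop atTop) :
    ∀ ε₀ : ℝ, 0 < ε₀ → ∀ (x : ∀ m, V m) (k : ℕ → ℕ),
      (∀ m, (k m : ℝ) <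
        (1 - ε₀) * (((q : ℝ) + 1) / ((q : ℝ) - 1)) * Real.logb q (Fintype.card (V m))) →
      Tendsto (fun m => ∑ y,
          |((((q : ℝ) + 1)⁻¹ • (G m).adjMatrix ℝ) ^ (k m)).mulVec
              (fun z => if z = x m then (1 : ℝ) else 0) y
            - 1 / (Fintype.card (V m) : ℝ)|)
        atTop (nhds 2) := by
  intro ε₀ hε₀ x k hk
  have hq1 : (1 : ℝ) < q := by exact_mod_cast hq
  have hk' (m : ℕ) :
      (k m : ℝ) ≤ (1 - min ε₀ 1) * ((q + 1) / (q - 1)) * logb q (Fintype.card (V m)) := by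
    have hL : 0 ≤ logb q (Fintype.card (V m)) :=
      logb_nonneg hq1 (by exact_mod_cast Fintype.card_pos_iff.2 ⟨x m⟩)
    refine (hk m).le.trans ?_
    gcongr
    exact min_le_left _ _
  simpa only [SimpleGraph.walkDist, Nat.cast_add, Nat.cast_one] using
    tendsto_sum_abs_walkDist_sub_inv_card hq hreg hcard (lt_min hε₀ one_pos) (min_le_right _ _) x
      hk'

/-- For a family of `(q+1)`-regular non-bipartite graphs with `n → ∞`,
for every `ε₀ > 0`, every choice of base vertices, and every
`k < (1-ε₀)((q+1)/(q-1)) log_q n`, the L¹ distance `‖A^k δ_{x₀} − π‖₁` is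
`2 − o_{ε₀}(1)`, i.e. it tends to `2`. -/
theorem stmt11 (q : ℕ) (hq : 2 ≤ q) (V : ℕ → Type) [∀ m, Fintype (V m)]
    (G : ∀ m, SimpleGraph (V m))
    (hreg : ∀ m, (G m).IsRegularOfDegree (q + 1))
    (hnb : ∀ m, ¬ (G m).Colorable 2)
    (hcard : Tendsto (fun m => Fintype.card (V m)) atTop atTop) :
    ∀ ε₀ : ℝ, 0 < ε₀ → ∀ (x : ∀ m, V m) (k : ℕ → ℕ),
      (∀ m, (k m : ℝ) <
        (1 - ε₀) * (((q : ℝ) + 1) / ((q : ℝ) - 1)) * Real.logb q (Fintype.card (V m))) →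
      Tendsto (fun m => ∑ y,
          |((((q : ℝ) + 1)⁻¹ • (G m).adjMatrix ℝ) ^ (k m)).mulVec
              (fun z => if z = x m then (1 : ℝ) else 0) y
            - 1 / (Fintype.card (V m) : ℝ)|)
        atTop (nhds 2) :=
  stmt11_general q hq V G hreg hcard
end

section
/- For each prime t > 2 and T ≥ 1, the number of matrices γ ∈ SL₂(ℤ) with γ ≡ I (mod t) and with all entries bounded by T in absolute value is ≪_ε (T/t² + 1)·(T/t + 1)·T^ε for every ε > 0. -/
/-!
Write `γ = !![a, b; c, d]`. From `a ≡ d ≡ 1`, `b ≡ c ≡ 0 (mod t)` and `ad - bc = 1` we get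
`a + d - 2 = bc - (a - 1)(d - 1) ≡ 0 (mod t²)`, so the diagonal `(a, d)` takes
`O((T/t + 1)(T/t² + 1))` values. Once the diagonal is fixed, so is `bc = ad - 1`. If it is nonzero,
`b` is one of its `O_ε(T^ε)` divisors and determines `c`. If it is zero, then `a = d = ±1` and
one of `b, c` vanishes while the other is a multiple of `t`, which leaves `O(T/t + 1)` matrices.
-/

open Finset Real

lemma natCast_add_one_le_max_mul_pow {x : ℝ} (hx : 1 < x) (k : ℕ) :
    (k + 1 : ℝ) ≤ max 1 (log x)⁻¹ * x ^ k := by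
  have hlog : 0 < log x := log_pos hx
  have hexp : 1 + k * log x ≤ x ^ k := by
    rw [← rpow_natCast, rpow_def_of_pos (by linarith), mul_comm]
    linarith [add_one_le_exp (log x * k)]
  have hc : 1 ≤ max 1 (log x)⁻¹ * log x := by
    calc 1 = (log x)⁻¹ * log x := (inv_mul_cancel₀ hlog.ne').symm
      _ ≤ _ := by gcongr; exact le_max_right _ _
  nlinarith [le_max_left 1 (log x)⁻¹, (k.cast_nonneg : (0 : ℝ) ≤ k)]

theorem Nat.exists_card_divisors_le_rpow {ε : ℝ} (hε : 0 < ε) :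
    ∃ C : ℝ, 0 ≤ C ∧ ∀ n : ℕ, (#n.divisors : ℝ) ≤ C * n ^ ε := by
  set c : ℕ → ℝ := fun p => max 1 (ε * Real.log p)⁻¹
  have hc : ∀ p, 1 ≤ c p := fun p => le_max_left _ _
  -- a prime factor contributes more than `1` to `d(n) / n ^ ε` only if `p < exp (1 / ε)`
  have hc_large : ∀ p : ℕ, exp ε⁻¹ ≤ p → c p = 1 := by
    intro p hp
    have : 1 ≤ ε * Real.log p := by
      rwa [← div_le_iff₀' hε, one_div, le_log_iff_exp_le ((exp_pos _).trans_le hp)]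
    exact max_eq_left (inv_le_one_of_one_le₀ this)
  refine ⟨∏ p ∈ range ⌈exp ε⁻¹⌉₊, c p, prod_nonneg fun p _ => zero_le_one.trans (hc p),
    fun n => ?_⟩
  rcases eq_or_ne n 0 with rfl | hn
  · simp [zero_rpow hε.ne']
  have hfactor : ∀ p ∈ n.primeFactors,
      (n.factorization p + 1 : ℝ) ≤ c p * ((p : ℝ) ^ ε) ^ n.factorization p := by
    intro p hp
    have hp1 : (1 : ℝ) < p := by exact_mod_cast (prime_of_mem_primeFactors hp).one_lt
    simpa [c, log_rpow (zero_lt_one.trans hp1)] using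
      natCast_add_one_le_max_mul_pow (one_lt_rpow hp1 hε) (n.factorization p)
  have hn_rpow : (n : ℝ) ^ ε = ∏ p ∈ n.primeFactors, ((p : ℝ) ^ ε) ^ n.factorization p := by
    rw [prod_congr rfl fun p _ => rpow_pow_comm p.cast_nonneg ε _,
      finsetProd_rpow _ _ fun p _ => by positivity]
    exact_mod_cast congrArg (fun m : ℕ => (m : ℝ) ^ ε) (prod_factorization_pow_eq_self hn).symm
  calc (#n.divisors : ℝ) = ∏ p ∈ n.primeFactors, (n.factorization p + 1 : ℝ) := by
        rw [Nat.card_divisors hn]; push_cast; rfl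
    _ ≤ ∏ p ∈ n.primeFactors, c p * ((p : ℝ) ^ ε) ^ n.factorization p :=
        prod_le_prod (fun _ _ => by positivity) hfactor
    _ = (∏ p ∈ n.primeFactors, c p) * n ^ ε := by rw [prod_mul_distrib, hn_rpow]
    _ ≤ (∏ p ∈ range ⌈exp ε⁻¹⌉₊, c p) * n ^ ε := by
        refine mul_le_mul_of_nonneg_right ?_ (by positivity)
        rw [← prod_filter_of_ne (p := (· < ⌈exp ε⁻¹⌉₊)) fun p _ hp => ?_]
        · exact prod_le_prod_of_subset_of_one_le (fun p hp => mem_range.2 (mem_filter.1 hp).2)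
            (fun p _ => zero_le_one.trans (hc p)) fun p _ _ => hc p
        · by_contra! h
          exact hp (hc_large p (Nat.ceil_le.1 h))

theorem Int.card_divisors (z : ℤ) : #z.divisors = 2 * #z.natAbs.divisors := by
  unfold Int.divisors
  rw [card_disjUnion, card_map, card_map, two_mul]

theorem Int.exists_card_divisors_le_rpow {ε : ℝ} (hε : 0 < ε) :
    ∃ C : ℝ, 0 ≤ C ∧ ∀ z : ℤ, (#z.divisors : ℝ) ≤ C * |(z : ℝ)| ^ ε := by
  obtain ⟨C, hC0, hC⟩ := Nat.exists_card_divisors_le_rpow hε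
  refine ⟨2 * C, by positivity, fun z => ?_⟩
  rw [Int.card_divisors, Nat.cast_mul, Nat.cast_ofNat, mul_assoc, ← Int.cast_abs,
    ← Int.natCast_natAbs, Int.cast_natCast]
  exact mul_le_mul_of_nonneg_left (hC _) zero_le_two

theorem Int.card_filter_mul_eq_le_card_divisors {m : ℤ} (hm : m ≠ 0) (s : Finset (ℤ × ℤ)) :
    #{p ∈ s | p.1 * p.2 = m} ≤ #m.divisors := by
  refine card_le_card_of_injOn Prod.fst (fun p hp => ?_) fun p hp q hq hpq => ?_
  · exact Int.mem_divisors.2 ⟨⟨p.2, ((mem_filter.1 hp).2).symm⟩, hm⟩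
  · have hp' := (mem_filter.1 hp).2
    have hq' := (mem_filter.1 hq).2
    refine Prod.ext hpq (mul_left_cancel₀ (left_ne_zero_of_mul (hp'.symm ▸ hm)) ?_)
    rw [hp', hpq, hq']

theorem Finset.card_le_card_mul_of_card_fiber_le {α β : Type*} [DecidableEq β] {s : Finset α}
    {t : Finset β} {f : α → β} (hf : ∀ a ∈ s, f a ∈ t) {K : ℝ}
    (hK : ∀ b ∈ t, (#{a ∈ s | f a = b} : ℝ) ≤ K) : (#s : ℝ) ≤ #t * K := by
  rw [card_eq_sum_card_fiberwise hf]
  push_cast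
  exact (sum_le_sum hK).trans_eq (by rw [sum_const, nsmul_eq_mul])

theorem Int.card_Icc_filter_modEq_le {a b : ℤ} (hab : a ≤ b) (v : ℤ) {r : ℤ} (hr : 0 < r) :
    (#{x ∈ Icc a b | x ≡ v [ZMOD r]} : ℝ) ≤ (b - a) / r + 1 := by
  have hr' : (0 : ℚ) < r := by exact_mod_cast hr
  set c := ⌊(b - v) / (r : ℚ)⌋ - ⌊(((a - 1 : ℤ) : ℚ) - v) / r⌋
  have hcq : (c : ℚ) < (b - a + 1) / r + 1 := by
    have h1 := Int.floor_le ((b - v) / (r : ℚ))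
    have h2 := Int.sub_one_lt_floor ((((a - 1 : ℤ) : ℚ) - v) / r)
    have : ((b - a + 1 : ℤ) : ℚ) / r = (b - v) / r - (((a - 1 : ℤ) : ℚ) - v) / r := by
      push_cast; ring
    push_cast [c] at this h2 ⊢
    linarith
  have hc : (c - 1) * r ≤ b - a := by
    have : (c : ℚ) * r < b - a + 1 + r := by
      rw [← lt_div_iff₀ hr']
      rwa [add_div, div_self hr'.ne']
    have : c * r < b - a + 1 + r := by exact_mod_cast this
    linarith
  have hcard : (#{x ∈ Icc a b | x ≡ v [ZMOD r]} : ℤ) = max c 0 := by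
    rw [← Ioc_sub_one_left_eq_Icc, Int.Ioc_filter_modEq_card _ _ hr]
  have hrR : (0 : ℝ) < r := by exact_mod_cast hr
  have hcR : ((c - 1 : ℤ) : ℝ) ≤ (b - a) / r := by
    rw [le_div_iff₀ hrR]; exact_mod_cast hc
  have hab' : (0 : ℝ) ≤ (b - a) / r := div_nonneg (by simp [hab]) hrR.le
  rw [← Int.cast_natCast, hcard, Int.cast_max]
  push_cast at hcR
  exact max_le (by linarith) (by linarith)

noncomputable def boundedInts (T : ℝ) : Finset ℤ := Icc (-⌊T⌋) ⌊T⌋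

theorem mem_boundedInts {T : ℝ} {x : ℤ} : x ∈ boundedInts T ↔ |(x : ℝ)| ≤ T := by
  rw [boundedInts, mem_Icc, abs_le, neg_le, Int.le_floor, Int.le_floor, Int.cast_neg, neg_le]

theorem card_boundedInts_filter_modEq_le {T : ℝ} (hT : 0 ≤ T) (v : ℤ) {r : ℤ} (hr : 0 < r) :
    (#{x ∈ boundedInts T | x ≡ v [ZMOD r]} : ℝ) ≤ 2 * (T / r + 1) := by
  have hr' : (0 : ℝ) < r := by exact_mod_cast hr
  have hfloor : (⌊T⌋ : ℝ) / r ≤ T / r := div_le_div_of_nonneg_right (Int.floor_le T) hr'.le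
  refine (Int.card_Icc_filter_modEq_le (by simpa using Int.floor_nonneg.2 hT) v hr).trans ?_
  rw [Int.cast_neg, sub_neg_eq_add, add_div]
  linarith

theorem Int.add_modEq_two_of_mul_sub_mul_eq_one {t a b c d : ℤ} (h : a * d - b * c = 1)
    (ha : a ≡ 1 [ZMOD t]) (hd : d ≡ 1 [ZMOD t]) (hb : b ≡ 0 [ZMOD t]) (hc : c ≡ 0 [ZMOD t]) :
    a + d ≡ 2 [ZMOD t ^ 2] := by
  rw [Int.modEq_iff_dvd, sq,
    show 2 - (a + d) = (1 - a) * (1 - d) - (0 - b) * (0 - c) by linear_combination -h]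
  exact dvd_sub (mul_dvd_mul ha.dvd hd.dvd) (mul_dvd_mul hb.dvd hc.dvd)

theorem Matrix.intCast_modEq_one_apply {n : Type*} [DecidableEq n] {t : ℕ} {A : Matrix n n ℤ}
    (h : ∀ i j, (A i j : ZMod t) = (1 : Matrix n n (ZMod t)) i j) (i j : n) :
    A i j ≡ (1 : Matrix n n ℤ) i j [ZMOD t] := by
  rw [← ZMod.intCast_eq_intCast_iff, h, Matrix.one_apply, Matrix.one_apply]
  split_ifs <;> simp

theorem sq_add_one_rpow_half_le {T : ℝ} (hT : 1 ≤ T) {ε : ℝ} (hε : 0 ≤ ε) :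
    (T ^ 2 + 1) ^ (ε / 2) ≤ 2 ^ ε * T ^ ε := by
  have hsq : T ^ 2 + 1 ≤ (2 * T) ^ 2 := by nlinarith
  calc (T ^ 2 + 1) ^ (ε / 2) ≤ ((2 * T) ^ 2) ^ (ε / 2) := by gcongr
    _ = 2 ^ ε * T ^ ε := by
      rw [← rpow_natCast, ← rpow_mul (by positivity), Nat.cast_ofNat,
        mul_div_cancel₀ ε two_ne_zero, mul_rpow zero_le_two (by positivity)]

section CongruenceCount

variable (t : ℕ) (T : ℝ)

/-- `((a, d), (b, c))` stands for the matrix `!![a, b; c, d]`: grouping the diagonal lets the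
fibre over `(a, d)` be counted by the divisors of `b * c = a * d - 1`. -/
noncomputable def congruenceEntries : Finset ((ℤ × ℤ) × ℤ × ℤ) :=
  {q ∈ (boundedInts T ×ˢ boundedInts T) ×ˢ (boundedInts T ×ˢ boundedInts T) |
    q.1.1 * q.1.2 - q.2.1 * q.2.2 = 1 ∧ q.1.1 ≡ 1 [ZMOD t] ∧ q.1.2 ≡ 1 [ZMOD t] ∧
      q.2.1 ≡ 0 [ZMOD t] ∧ q.2.2 ≡ 0 [ZMOD t]}

noncomputable def congruenceDiagonals : Finset (ℤ × ℤ) :=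
  {p ∈ boundedInts T ×ˢ boundedInts T | p.1 ≡ 1 [ZMOD t] ∧ p.1 + p.2 ≡ 2 [ZMOD t ^ 2]}

theorem ncard_le_card_congruenceEntries :
    {γ : Matrix.SpecialLinearGroup (Fin 2) ℤ | (∀ i j, |(γ.1 i j : ℝ)| ≤ T) ∧
        ∀ i j, (γ.1 i j : ZMod t) = (1 : Matrix (Fin 2) (Fin 2) (ZMod t)) i j}.ncard ≤
      #(congruenceEntries t T) := by
  rw [← Set.ncard_coe_finset]
  refine Set.ncard_le_ncard_of_injOn (fun γ => ((γ 0 0, γ 1 1), (γ 0 1, γ 1 0)))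
    (fun γ ⟨hbound, hcong⟩ => ?_) (fun γ _ δ _ h => ?_) (finite_toSet _)
  · have hdet := γ.det_coe
    rw [Matrix.det_fin_two] at hdet
    have hmod := Matrix.intCast_modEq_one_apply hcong
    exact mem_filter.2 ⟨by simp [mem_boundedInts, hbound], hdet, hmod 0 0, hmod 1 1, hmod 0 1,
      hmod 1 0⟩
  · simp only [Prod.mk.injEq] at h
    ext i j
    fin_cases i <;> fin_cases j <;> simp [h]

theorem card_congruenceDiagonals_le (ht : 0 < t) (hT : 0 ≤ T) :
    (#(congruenceDiagonals t T) : ℝ) ≤ 2 * (T / t + 1) * (2 * (T / t ^ 2 + 1)) := by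
  have ht' : (0 : ℤ) < t := by exact_mod_cast ht
  have hfst := card_boundedInts_filter_modEq_le hT 1 ht'
  have hsnd := fun a => card_boundedInts_filter_modEq_le hT (2 - a) (pow_pos ht' 2)
  push_cast at hfst hsnd
  refine (card_le_card_mul_of_card_fiber_le (f := Prod.fst) (fun p hp => ?_) fun a _ => ?_).trans
    (mul_le_mul_of_nonneg_right hfst (by positivity))
  · obtain ⟨hp, ha, -⟩ := mem_filter.1 hp
    exact mem_filter.2 ⟨(mem_product.1 hp).1, ha⟩
  · refine le_trans ?_ (hsnd a)
    refine Nat.cast_le.2 (card_le_card_of_injOn Prod.snd (fun p hp => ?_) fun p hp p' hp' h => ?_)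
    · obtain ⟨hpD, rfl⟩ := mem_filter.1 hp
      obtain ⟨hmem, -, had⟩ := mem_filter.1 hpD
      refine mem_filter.2 ⟨(mem_product.1 hmem).2, Int.ModEq.add_left_cancel' p.1 ?_⟩
      rwa [add_sub_cancel]
    · exact Prod.ext ((mem_filter.1 hp).2.trans (mem_filter.1 hp').2.symm) h

theorem card_congruenceEntries_filter_fst_eq_le (p : ℤ × ℤ) :
    #{q ∈ congruenceEntries t T | q.1 = p} ≤
      #{x ∈ boundedInts T ×ˢ boundedInts T | x.1 * x.2 = p.1 * p.2 - 1} := by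
  refine card_le_card_of_injOn Prod.snd (fun q hq => ?_) fun q hq q' hq' h => ?_
  · obtain ⟨hqE, rfl⟩ := mem_filter.1 hq
    obtain ⟨hmem, hdet, -⟩ := mem_filter.1 hqE
    exact mem_filter.2 ⟨(mem_product.1 hmem).2, by rw [← hdet]; ring⟩
  · exact Prod.ext ((mem_filter.1 hq).2.trans (mem_filter.1 hq').2.symm) h

theorem card_congruenceEntries_filter_ne_le {ε C : ℝ} (hε : 0 ≤ ε) (hC0 : 0 ≤ C)
    (hC : ∀ z : ℤ, (#z.divisors : ℝ) ≤ C * |(z : ℝ)| ^ ε) :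
    (#{q ∈ congruenceEntries t T | q.1.1 * q.1.2 ≠ 1} : ℝ) ≤
      #(congruenceDiagonals t T) * (C * (T ^ 2 + 1) ^ ε) := by
  calc _ ≤ #{p ∈ congruenceDiagonals t T | p.1 * p.2 ≠ 1} * (C * (T ^ 2 + 1) ^ ε) :=
        card_le_card_mul_of_card_fiber_le (f := Prod.fst) (fun q hq => ?_) fun p hp => ?_
    _ ≤ _ := by gcongr; exact filter_subset _ _
  · obtain ⟨hqE, hne⟩ := mem_filter.1 hq
    obtain ⟨hmem, hdet, ha, hd, hb, hc⟩ := mem_filter.1 hqE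
    exact mem_filter.2 ⟨mem_filter.2 ⟨(mem_product.1 hmem).1, ha,
      Int.add_modEq_two_of_mul_sub_mul_eq_one hdet ha hd hb hc⟩, hne⟩
  · obtain ⟨hp, hne⟩ := mem_filter.1 hp
    obtain ⟨ha, hd⟩ := mem_product.1 (mem_filter.1 hp).1
    rw [mem_boundedInts] at ha hd
    have hm : |((p.1 * p.2 - 1 : ℤ) : ℝ)| ≤ T ^ 2 + 1 := by
      push_cast
      calc |(p.1 * p.2 - 1 : ℝ)| ≤ |(p.1 : ℝ)| * |(p.2 : ℝ)| + 1 := by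
            simpa [abs_mul] using abs_sub (p.1 * p.2 : ℝ) 1
        _ ≤ T ^ 2 + 1 := by nlinarith [abs_nonneg (p.1 : ℝ)]
    calc (#{q ∈ {q ∈ congruenceEntries t T | q.1.1 * q.1.2 ≠ 1} | q.1 = p} : ℝ)
        ≤ #{q ∈ congruenceEntries t T | q.1 = p} :=
          Nat.cast_le.2 (card_le_card (filter_subset_filter _ (filter_subset _ _)))
      _ ≤ #(p.1 * p.2 - 1).divisors := Nat.cast_le.2 <|
          (card_congruenceEntries_filter_fst_eq_le t T p).trans
            (Int.card_filter_mul_eq_le_card_divisors (sub_ne_zero.2 hne) _)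
      _ ≤ C * |((p.1 * p.2 - 1 : ℤ) : ℝ)| ^ ε := hC _
      _ ≤ C * (T ^ 2 + 1) ^ ε := by gcongr

theorem card_congruenceEntries_filter_eq_le (ht : 0 < t) (hT : 0 ≤ T) :
    (#{q ∈ congruenceEntries t T | q.1.1 * q.1.2 = 1} : ℝ) ≤ 8 * (T / t + 1) := by
  set M := {x ∈ boundedInts T | x ≡ 0 [ZMOD t]}
  have hsub : {q ∈ congruenceEntries t T | q.1.1 * q.1.2 = 1} ⊆
      {(1, 1), (-1, -1)} ×ˢ ({0} ×ˢ M ∪ M ×ˢ {0}) := by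
    intro q hq
    obtain ⟨hqE, hone⟩ := mem_filter.1 hq
    obtain ⟨hmem, hdet, -, -, hb, hc⟩ := mem_filter.1 hqE
    obtain ⟨-, hbT, hcT⟩ : _ ∧ q.2.1 ∈ boundedInts T ∧ q.2.2 ∈ boundedInts T := by
      simpa only [mem_product] using hmem
    refine mem_product.2 ⟨?_, ?_⟩
    · rcases Int.eq_one_or_neg_one_of_mul_eq_one' hone with h | h <;> simp [Prod.ext_iff, h]
    · rcases mul_eq_zero.1 (show q.2.1 * q.2.2 = 0 by linarith) with h | h <;>
        simp [M, Prod.ext_iff, h, hbT, hcT, hb, hc]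
  have hM := card_boundedInts_filter_modEq_le hT 0 (Int.natCast_pos.2 ht)
  push_cast at hM
  have hcard : #({(1, 1), (-1, -1)} ×ˢ ({0} ×ˢ M ∪ M ×ˢ {0}) : Finset ((ℤ × ℤ) × ℤ × ℤ)) ≤
      2 * (#M + #M) := by
    rw [card_product]
    gcongr
    · exact card_le_two
    · exact (card_union_le _ _).trans (by simp)
  calc (#{q ∈ congruenceEntries t T | q.1.1 * q.1.2 = 1} : ℝ) ≤ 2 * (#M + #M) := by
        exact_mod_cast (card_le_card hsub).trans hcard
    _ ≤ 8 * (T / t + 1) := by linarith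

theorem card_congruenceEntries_le (ht : 0 < t) (hT : 1 ≤ T) {ε C : ℝ} (hε : 0 ≤ ε) (hC0 : 0 ≤ C)
    (hC : ∀ z : ℤ, (#z.divisors : ℝ) ≤ C * |(z : ℝ)| ^ (ε / 2)) :
    (#(congruenceEntries t T) : ℝ) ≤ (4 * C * 2 ^ ε + 8) * (T / t ^ 2 + 1) * (T / t + 1) * T ^ ε := by
  have hT0 : 0 ≤ T := zero_le_one.trans hT
  have hX : 0 ≤ T / t := by positivity
  have hY : 0 ≤ T / t ^ 2 := by positivity
  have hE : 1 ≤ T ^ ε := one_le_rpow hT hε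
  have hone := card_congruenceEntries_filter_eq_le t T ht hT0
  have hne := (card_congruenceEntries_filter_ne_le t T (by positivity) hC0 hC).trans <|
    mul_le_mul (card_congruenceDiagonals_le t T ht hT0)
      (mul_le_mul_of_nonneg_left (sq_add_one_rpow_half_le hT hε) hC0) (by positivity) (by positivity)
  rw [← card_filter_add_card_filter_not (fun q => q.1.1 * q.1.2 = 1), Nat.cast_add]
  nlinarith [mul_nonneg (mul_nonneg hX hY) (sub_nonneg.2 hE), mul_nonneg hX (sub_nonneg.2 hE),
    mul_nonneg hY (sub_nonneg.2 hE)]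

end CongruenceCount

/-- For each prime `t > 2` and `T ≥ 1`, the number of `γ ∈ SL₂(ℤ)` with
`γ ≡ I (mod t)` and all entries bounded by `T` in absolute value is
`≪_ε (T/t² + 1)(T/t + 1) T^ε`, with the implied constant depending only on `ε`. -/
theorem stmt14 : ∀ ε : ℝ, 0 < ε → ∃ C : ℝ, 0 < C ∧
    ∀ t : ℕ, t.Prime → 2 < t → ∀ T : ℝ, 1 ≤ T →
      (({γ : Matrix.SpecialLinearGroup (Fin 2) ℤ |
          (∀ i j, |(γ.1 i j : ℝ)| ≤ T) ∧
          (∀ i j, ((γ.1 i j : ZMod t) = (1 : Matrix (Fin 2) (Fin 2) (ZMod t)) i j))}).ncard : ℝ)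
        ≤ C * (T / (t : ℝ) ^ 2 + 1) * (T / (t : ℝ) + 1) * T ^ ε := by
  intro ε hε
  obtain ⟨C, hC0, hC⟩ := Int.exists_card_divisors_le_rpow (half_pos hε)
  refine ⟨4 * C * 2 ^ ε + 8, by positivity, fun t ht _ T hT => ?_⟩
  exact (Nat.cast_le.2 (ncard_le_card_congruenceEntries t T)).trans
    (card_congruenceEntries_le t T ht.pos hT hε.le hC0 hC)
end
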